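/- Let G be a finite solvable group acting by automorphisms on a commutative ℂ-algebra V, with n = |G|. Then every element of V lies in the smallest subset of V that contains the fixed subalgebra V₀, is closed under addition, and is closed under taking n-th roots (i.e., if x ∈ V satisfies x^n = a for some a already in the subset, then x is in the subset). -/

import Mathlib

/-!
Induct along the derived series: it suffices to show that if every vector fixed by a finite
group `K` lies in `S`, then so does every vector `v` fixed by the commutator subgroup of `K`.
By orthogonality of the linear characters `χ : K →* ℂˣ` (which are those of the abelianization),
`v` is the sum of its projections onto the `χ`-eigenspaces of the action. For such a projection
`s` we have `k • s ^ n = χ k ^ n • s ^ n = s ^ n`, so `s ^ n` is `K`-fixed, hence in `S`,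
hence so is `s`, and finally their sum `v`.
-/

open Finset MulAction

section Characters

variable {K F : Type*} [Group K] [Finite K] [Field F] [IsAlgClosed F] [CharZero F]

lemma exists_monoidHom_units_apply_ne_one {k : K} (hk : k ∉ commutator K) :
    ∃ χ : K →* Fˣ, χ k ≠ 1 := by
  obtain ⟨ψ, hψ⟩ := CommGroup.exists_apply_ne_one_of_hasEnoughRootsOfUnity (Abelianization K) F
    (a := Abelianization.of k) (by rwa [Ne, ← MonoidHom.mem_ker, Abelianization.ker_of])
  exact ⟨ψ.comp Abelianization.of, hψ⟩

lemma card_monoidHom_units_eq_index_commutator : Nat.card (K →* Fˣ) = (commutator K).index :=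
  Nat.card_congr <| Abelianization.lift.trans
    (CommGroup.monoidHom_mulEquiv_of_hasEnoughRootsOfUnity (Abelianization K) F).some.toEquiv

instance : Finite (K →* Fˣ) :=
  Nat.finite_of_card_ne_zero <|
    card_monoidHom_units_eq_index_commutator.trans_ne Subgroup.index_ne_zero_of_finite

lemma sum_monoidHom_units_apply [Fintype (K →* Fˣ)] [DecidablePred (· ∈ commutator K)] (k : K) :
    ∑ χ : K →* Fˣ, (χ k : F) = if k ∈ commutator K then ((commutator K).index : F) else 0 := by
  split_ifs with hk
  · have hχ (χ : K →* Fˣ) : χ k = 1 := Abelianization.commutator_subset_ker χ hk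
    simp [hχ, ← card_monoidHom_units_eq_index_commutator (F := F)]
  · obtain ⟨ψ, hψ⟩ := exists_monoidHom_units_apply_ne_one (F := F) hk
    refine eq_zero_of_mul_eq_self_left (b := (ψ k : F)) (fun h ↦ hψ (Units.ext h)) ?_
    rw [mul_sum]
    exact Fintype.sum_bijective (ψ * ·) (Group.mulLeft_bijective ψ) _ _ fun χ ↦ by simp

end Characters

section Components

variable {K F M : Type*} [Group K] [Fintype K] [Field F] [AddCommMonoid M] [Module F M]
  [DistribMulAction K M]

noncomputable def charComponent (χ : K →* Fˣ) (v : M) : M :=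
  (Fintype.card K : F)⁻¹ • ∑ k : K, (χ k⁻¹ : F) • k • v

lemma smul_charComponent [SMulCommClass K F M] (χ : K →* Fˣ) (v : M) (g : K) :
    g • charComponent χ v = (χ g : F) • charComponent χ v := by
  have hsum : g • ∑ k : K, (χ k⁻¹ : F) • k • v = (χ g : F) • ∑ k : K, (χ k⁻¹ : F) • k • v := by
    simp only [smul_sum, smul_comm g, smul_smul g]
    refine Fintype.sum_equiv (Equiv.mulLeft g) _ _ fun k ↦ ?_
    rw [Equiv.coe_mulLeft, smul_smul (χ g : F), ← Units.val_mul, ← map_mul]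
    simp
  rw [charComponent, smul_comm, hsum, smul_comm]

variable [IsAlgClosed F] [CharZero F] [Fintype (K →* Fˣ)]

lemma sum_charComponent {v : M} (hv : v ∈ fixedPoints (commutator K) M) :
    ∑ χ : K →* Fˣ, charComponent χ v = v := by
  classical
  have hfix (k : K) (hk : k ∈ commutator K) : k • v = v := hv ⟨k, hk⟩
  simp only [charComponent, ← smul_sum]
  rw [sum_comm]
  simp only [← sum_smul, sum_monoidHom_units_apply, _root_.inv_mem_iff, ite_smul, zero_smul,
    ← sum_filter]
  have hcard : (#{k | k ∈ commutator K} * (commutator K).index : F) = Fintype.card K := by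
    rw [← Nat.cast_mul, ← Fintype.card_subtype, ← Nat.card_eq_fintype_card, Subgroup.card_mul_index,
      Nat.card_eq_fintype_card]
  rw [sum_congr rfl fun k hk ↦ by rw [hfix k (mem_filter.1 hk).2], sum_const,
    ← Nat.cast_smul_eq_nsmul F, smul_smul, smul_smul, mul_assoc, hcard,
    inv_mul_cancel₀ (Nat.cast_ne_zero.mpr Fintype.card_ne_zero), one_smul]

end Components

lemma smul_pow_eq_self_of_smul_eq_units_smul {K F V : Type*} [Monoid K] [CommSemiring F]
    [Semiring V] [Algebra F V] [MulSemiringAction K V] (χ : K →* Fˣ) {s : V}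
    (hs : ∀ k : K, k • s = (χ k : F) • s) {n : ℕ} (hn : ∀ k : K, k ^ n = 1) :
    s ^ n ∈ fixedPoints K V := fun k ↦ by
  rw [smul_pow', hs, smul_pow, ← Units.val_pow_eq_pow_val, ← map_pow, hn, map_one, Units.val_one,
    one_smul]

theorem fixedPoints_commutator_subset {K F V : Type*} [Group K] [Finite K] [Field F]
    [IsAlgClosed F] [CharZero F] [Semiring V] [Algebra F V] [MulSemiringAction K V]
    [SMulCommClass K F V] {S : Set V} {n : ℕ} (hn : ∀ k : K, k ^ n = 1) (hfix : fixedPoints K V ⊆ S)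
    (hadd : ∀ a ∈ S, ∀ b ∈ S, a + b ∈ S) (hroot : ∀ a ∈ S, ∀ x : V, x ^ n = a → x ∈ S) :
    fixedPoints (commutator K) V ⊆ S := by
  intro v hv
  have := Fintype.ofFinite K
  have := Fintype.ofFinite (K →* Fˣ)
  rw [← sum_charComponent (F := F) hv]
  refine sum_induction _ (· ∈ S) (fun a b ha hb ↦ hadd a ha b hb) (hfix fun k ↦ smul_zero k)
    fun χ _ ↦ ?_
  exact hroot _ (hfix (smul_pow_eq_self_of_smul_eq_units_smul χ (smul_charComponent χ v) hn)) _ rfl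

theorem stmt_3 {G V : Type*} [Group G] [Fintype G] [Group.IsSolvable G] [CommRing V] [Algebra ℂ V]
    [MulSemiringAction G V] [SMulCommClass G ℂ V]
    (S : Set V)
    (hV0 : ∀ v : V, (∀ g : G, g • v = v) → v ∈ S)
    (hadd : ∀ a ∈ S, ∀ b ∈ S, a + b ∈ S)
    (hroot : ∀ a ∈ S, ∀ x : V, x ^ (Fintype.card G) = a → x ∈ S) :
    ∀ x : V, x ∈ S := by
  have hderived (j : ℕ) : fixedPoints (derivedSeries G j) V ⊆ S := by
    induction j with
    | zero => exact fun v hv ↦ hV0 v fun g ↦ hv ⟨g, Subgroup.mem_top g⟩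
    | succ j ih =>
      refine fun v hv ↦ fixedPoints_commutator_subset (F := ℂ)
        (fun k ↦ Subtype.ext (pow_card_eq_one (x := (k : G)))) ih hadd hroot fun ⟨k, hk⟩ ↦ ?_
      refine hv ⟨k, ?_⟩
      rw [derivedSeries_succ, ← Subgroup.map_subtype_commutator]
      exact Subgroup.mem_map_of_mem _ hk
  obtain ⟨m, hm⟩ := Group.IsSolvable.solvable (G := G)
  intro x
  refine hderived m fun ⟨g, hg⟩ ↦ ?_
  rw [hm, Subgroup.mem_bot] at hg
  subst hg
  exact one_smul G x
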